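/- Let 𝒫₀ be a nonempty set of Borel probability measures on ℝ and let P be a probability measure on the canonical space ℝ^ℕ that is kernel-constructed from 𝒫₀. Then for every bounded continuous function φ : ℝ → ℝ and every i ≥ 1, P-almost surely −sup_{Q∈𝒫₀} ∫ (−φ) dQ ≤ E_P[φ(X_i) | F_{i−1}] ≤ sup_{Q∈𝒫₀} ∫ φ dQ, where E_P[· | F_{i−1}] denotes conditional expectation with respect to P (and F₀ is the trivial σ-algebra). -/

import Mathlib

/-! Under `P`, the joint law of the prefix `(X_1, …, X_i)` and the next coordinate `X_{i+1}` is
the law of the prefix composed with the kernel `κ_i`, so `κ_i` is a regular conditional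
distribution of `X_{i+1}` given `F_i`. Hence `E_P[φ(X_{i+1}) | F_i] = ∫ φ dκ_i(X_1, …, X_i)`
almost surely, and every such integral is taken against a member of `𝒫₀`. -/

open MeasureTheory ProbabilityTheory Filter
open scoped ENNReal

noncomputable section

/-- The finite-dimensional distributions built by iterating the kernels
(Ionescu–Tulcea construction): `seqMeasure κ 0` is the trivial measure on the
empty product, and `seqMeasure κ (n+1)` is obtained from `seqMeasure κ n` by
composing with the kernel `κ n` and gluing the new coordinate at the end. -/
def seqMeasure (κ : (n : ℕ) → Kernel (Fin n → ℝ) ℝ) : (n : ℕ) → Measure (Fin n → ℝ)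
  | 0 => Measure.dirac (fun i => i.elim0)
  | n + 1 => ((seqMeasure κ n).compProd (κ n)).map (fun p => Fin.snoc p.1 p.2)

/-- A probability measure `P` on the canonical space `ℝ^ℕ` is kernel-constructed from a
set `𝒫₀` of probability measures on `ℝ` if it is the Ionescu–Tulcea measure determined
by an initial law in `𝒫₀` and Markov kernels all of whose values lie in `𝒫₀`
(the initial law is `κ 0` applied to the empty tuple). -/
def KernelConstructed (𝒫₀ : Set (Measure ℝ)) (P : Measure (ℕ → ℝ)) : Prop :=
  ∃ κ : (n : ℕ) → Kernel (Fin n → ℝ) ℝ,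
    (∀ n x, κ n x ∈ 𝒫₀) ∧
    ∀ n : ℕ, P.map (fun ω (i : Fin n) => ω i.val) = seqMeasure κ n

/-- The canonical filtration `F_n = σ(X_1, …, X_n)` on `ℝ^ℕ`. -/
def canonicalFiltration (n : ℕ) : MeasurableSpace (ℕ → ℝ) :=
  MeasurableSpace.comap (fun ω (i : Fin n) => ω i.val) inferInstance

/-- In `ℝ`, `⨆ i ∈ s` also ranges over the indices outside `s`, which contribute `sSup ∅ = 0`. -/
theorem Real.le_biSup_of_forall_le {ι : Type*} {s : Set ι} {f : ι → ℝ} {M : ℝ}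
    (hM : ∀ i ∈ s, f i ≤ M) {x : ι} (hx : x ∈ s) : f x ≤ ⨆ i ∈ s, f i := by
  have hbdd : BddAbove (Set.range fun i => ⨆ _ : i ∈ s, f i) := by
    refine ⟨max M 0, ?_⟩
    rintro _ ⟨i, rfl⟩
    exact Real.iSup_le (fun hi => (hM i hi).trans (le_max_left _ _)) (le_max_right _ _)
  calc f x = ⨆ _ : x ∈ s, f x := (ciSup_pos (f := fun _ => f x) hx).symm
    _ ≤ ⨆ i ∈ s, f i := le_ciSup hbdd x

theorem integral_le_of_forall_abs_le {α : Type*} [MeasurableSpace α] {Q : Measure α}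
    [IsProbabilityMeasure Q] {ψ : α → ℝ} {M : ℝ} (hψ : ∀ x, |ψ x| ≤ M) :
    ∫ x, ψ x ∂Q ≤ M := by
  have h := norm_integral_le_of_norm_le_const (μ := Q) (f := ψ) (ae_of_all _ hψ)
  rw [probReal_univ, mul_one] at h
  exact (le_abs_self _).trans h

theorem integral_le_biSup_integral {α : Type*} [MeasurableSpace α] {S : Set (Measure α)}
    (hS : ∀ Q ∈ S, IsProbabilityMeasure Q) {ψ : α → ℝ} {M : ℝ} (hψ : ∀ x, |ψ x| ≤ M)
    {Q : Measure α} (hQ : Q ∈ S) : ∫ x, ψ x ∂Q ≤ ⨆ Q' ∈ S, ∫ x, ψ x ∂Q' :=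
  Real.le_biSup_of_forall_le (f := fun Q' => ∫ x, ψ x ∂Q')
    (fun Q' hQ' => have := hS Q' hQ'; integral_le_of_forall_abs_le hψ) hQ

theorem condExp_ae_eq_integral_of_map_eq_compProd {α β Ω F : Type*} [MeasurableSpace Ω]
    [StandardBorelSpace Ω] [Nonempty Ω] [NormedAddCommGroup F] [NormedSpace ℝ F]
    [CompleteSpace F] {mα : MeasurableSpace α} {mβ : MeasurableSpace β} {μ : Measure α}
    [IsFiniteMeasure μ] {X : α → β} {Y : α → Ω} (hX : Measurable X) (hY : AEMeasurable Y μ)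
    {κ : Kernel β Ω} [IsFiniteKernel κ] (hκ : μ.map (fun a => (X a, Y a)) = μ.map X ⊗ₘ κ)
    {f : Ω → F} (hf : StronglyMeasurable f) (hf_int : Integrable (fun a => f (Y a)) μ) :
    μ[fun a => f (Y a) | mβ.comap X] =ᵐ[μ] fun a => ∫ y, f y ∂κ (X a) := by
  filter_upwards [condExp_ae_eq_integral_condDistrib hX hY hf hf_int,
    ae_of_ae_map hX.aemeasurable (condDistrib_ae_eq_of_measure_eq_compProd X hY hκ)]
    with a hcondDistrib hκa
  rw [hcondDistrib, hκa]

theorem map_init_last_seqMeasure (κ : (n : ℕ) → Kernel (Fin n → ℝ) ℝ) (n : ℕ) :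
    (seqMeasure κ (n + 1)).map (fun q => (Fin.init q, q (Fin.last n))) =
      seqMeasure κ n ⊗ₘ κ n := by
  rw [seqMeasure, Measure.map_map (by fun_prop) (by fun_prop)]
  simp only [Function.comp_def, Fin.init_snoc, Fin.snoc_last, Measure.map_id']

theorem map_prefix_prod_apply_eq_compProd {P : Measure (ℕ → ℝ)}
    {κ : (n : ℕ) → Kernel (Fin n → ℝ) ℝ}
    (hP : ∀ n : ℕ, P.map (fun ω (i : Fin n) => ω i.val) = seqMeasure κ n) (n : ℕ) :
    P.map (fun ω => (fun i : Fin n => ω i.val, ω n)) =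
      P.map (fun ω (i : Fin n) => ω i.val) ⊗ₘ κ n := by
  rw [hP n, ← map_init_last_seqMeasure, ← hP (n + 1),
    Measure.map_map (by fun_prop) (by fun_prop)]
  rfl

theorem conditional_expectation_bounds_general
    (𝒫₀ : Set (Measure ℝ))
    (hprob : ∀ Q ∈ 𝒫₀, IsProbabilityMeasure Q)
    (P : Measure (ℕ → ℝ)) (hP : IsProbabilityMeasure P)
    (hKC : KernelConstructed 𝒫₀ P)
    (φ : ℝ → ℝ) (hφc : Continuous φ) (hφb : ∃ M : ℝ, ∀ x, |φ x| ≤ M) (i : ℕ) :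
    ∀ᵐ ω ∂P,
      -(⨆ Q ∈ 𝒫₀, ∫ x, -φ x ∂Q) ≤ (P[fun ω' => φ (ω' i) | canonicalFiltration i]) ω ∧
      (P[fun ω' => φ (ω' i) | canonicalFiltration i]) ω ≤ ⨆ Q ∈ 𝒫₀, ∫ x, φ x ∂Q := by
  obtain ⟨M, hM⟩ := hφb
  obtain ⟨κ, hκ𝒫₀, hmap⟩ := hKC
  have : IsMarkovKernel (κ i) := ⟨fun x => hprob _ (hκ𝒫₀ i x)⟩
  have hint : Integrable (fun ω : ℕ → ℝ => φ (ω i)) P :=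
    .of_bound (hφc.comp (continuous_apply i)).aestronglyMeasurable M (ae_of_all _ (hM <| · i))
  have hcond := condExp_ae_eq_integral_of_map_eq_compProd (by fun_prop)
    (measurable_pi_apply i).aemeasurable (map_prefix_prod_apply_eq_compProd hmap i)
    hφc.stronglyMeasurable hint
  filter_upwards [hcond] with ω hω
  rw [canonicalFiltration, hω]
  have hQ := hκ𝒫₀ i fun j => ω j
  have hneg : ∀ x, |-φ x| ≤ M := fun x => (abs_neg _).trans_le (hM x)
  exact ⟨neg_le.mpr (by simpa only [integral_neg] using integral_le_biSup_integral hprob hneg hQ),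
    integral_le_biSup_integral hprob hM hQ⟩

/-- if `P` is kernel-constructed from a nonempty set `𝒫₀` of Borel
probability measures on `ℝ`, then for every bounded continuous `φ` and every
coordinate `i` (0-indexed, so `X_i` is the `(i+1)`-st variable, conditioned on
`F_i = σ(X_1,…,X_i)`), `P`-a.s.
`-sup_{Q∈𝒫₀} ∫ -φ dQ ≤ E_P[φ(X_i) | F_{i-1}] ≤ sup_{Q∈𝒫₀} ∫ φ dQ`. -/
theorem conditional_expectation_bounds
    (𝒫₀ : Set (Measure ℝ)) (h₀ : 𝒫₀.Nonempty)
    (hprob : ∀ Q ∈ 𝒫₀, IsProbabilityMeasure Q)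
    (P : Measure (ℕ → ℝ)) (hP : IsProbabilityMeasure P)
    (hKC : KernelConstructed 𝒫₀ P)
    (φ : ℝ → ℝ) (hφc : Continuous φ) (hφb : ∃ M : ℝ, ∀ x, |φ x| ≤ M) (i : ℕ) :
    ∀ᵐ ω ∂P,
      -(⨆ Q ∈ 𝒫₀, ∫ x, -φ x ∂Q) ≤ (P[fun ω' => φ (ω' i) | canonicalFiltration i]) ω ∧
      (P[fun ω' => φ (ω' i) | canonicalFiltration i]) ω ≤ ⨆ Q ∈ 𝒫₀, ∫ x, φ x ∂Q :=
  conditional_expectation_bounds_general 𝒫₀ hprob P hP hKC φ hφc hφb i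

end
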